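/- Base integral curves of the primary un-reduced SODE Γ_1 through ω-horizontal initial velocities are exactly horizontal lifts of base integral curves of Γ̄: if c is the base integral curve of Γ_1 with c(0) = m and ċ(0) = h(m, v̄) for v̄ ∈ T_{π(m)}M̄, then c is the ω-horizontal lift through m of the base integral curve of Γ̄ with initial condition (π(m), v̄). -/

import Mathlib

/- STATEMENT 14: Base integral curves of the primary un-reduced SODE Γ₁ through ω-horizontal
initial velocities are exactly horizontal lifts of base integral curves of Γ̄: if c is the
base integral curve of Γ₁ with c(0) = m and ċ(0) = h(m, v̄), then c is the ω-horizontal lift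
through m of the base integral curve of Γ̄ with initial condition (π(m), v̄).

Formalization: trivialized bundle M = B × F, π = fst, connection with horizontal-lift map σ
(h(m, v̄) = (v̄, σ(m) v̄)), Γ̄ q = (q.2, f̄ q), Γ₁ = Γ̄^H + X_ω.  An integral curve γ of Γ₁ is
γ = ċ with c = τ ∘ γ; the conclusion states the three defining properties of the horizontal
lift of the base integral curve of Γ̄ through (π(m), v̄): c starts at m, all its velocities
are ω-horizontal, and its π-projection is the base integral curve of Γ̄ with the stated
initial condition. -/

noncomputable section

variable {B F : Type*} [NormedAddCommGroup B] [NormedSpace ℝ B]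
  [NormedAddCommGroup F] [NormedSpace ℝ F]

def GammaBarH (σ : (B × F) → (B →L[ℝ] F)) (fbar : B × B → B)
    (p : (B × F) × (B × F)) : (B × F) × (B × F) :=
  ((p.2.1, σ p.1 p.2.1),
   (fbar (p.1.1, p.2.1),
    σ p.1 (fbar (p.1.1, p.2.1)) + (fderiv ℝ σ p.1 p.2) p.2.1))

def XomegaAb (σ : (B × F) → (B →L[ℝ] F))
    (p : (B × F) × (B × F)) : (B × F) × (B × F) :=
  (((0 : B), p.2.2 - σ p.1 p.2.1), ((0 : B), (0 : F)))

/-- The primary un-reduced SODE Γ₁ = Γ̄^H + X_ω. -/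
def Gamma1 (σ : (B × F) → (B →L[ℝ] F)) (fbar : B × B → B)
    (p : (B × F) × (B × F)) : (B × F) × (B × F) :=
  GammaBarH σ fbar p + XomegaAb σ p

theorem horizontal_initial_velocity_gives_horizontal_lift
    (σ : (B × F) → (B →L[ℝ] F)) (hσ : ContDiff ℝ (⊤ : ℕ∞) σ)
    (fbar : B × B → B) (hf : ContDiff ℝ (⊤ : ℕ∞) fbar)
    (m : B × F) (vbar : B)
    (γ : ℝ → (B × F) × (B × F))
    -- γ = ċ is the (lifted) integral curve of Γ₁ …
    (hγ : ∀ t, HasDerivAt γ (Gamma1 σ fbar (γ t)) t)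
    -- … through the ω-horizontal initial velocity h(m, v̄) at m
    (hγ0 : γ 0 = (m, (vbar, σ m vbar))) :
    -- c(0) = m
    ((γ 0).1 = m) ∧
    -- all velocities ċ(t) = γ(t)₂ of c are ω-horizontal
    (∀ t, (γ t).2.2 = σ ((γ t).1) ((γ t).2.1)) ∧
    -- π ∘ c is the base integral curve of Γ̄ with initial condition (π(m), v̄)
    (((γ 0).1.1, (γ 0).2.1) = (m.1, vbar)) ∧
    (∀ t, HasDerivAt (fun s => ((γ s).1.1, (γ s).2.1))
      ((γ t).2.1, fbar ((γ t).1.1, (γ t).2.1)) t) := by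

  -- component derivatives
  have hc : ∀ t, HasDerivAt (fun s => (γ s).1) ((γ t).2) t := by
    intro t
    have := hasFDerivAt_fst.comp_hasDerivAt t (hγ t)
    simpa [Gamma1, GammaBarH, XomegaAb, Prod.add_def, Function.comp_def] using this
  have hx : ∀ t, HasDerivAt (fun s => (γ s).1.1) ((γ t).2.1) t := by
    intro t; exact (hc t).fst
  have hu : ∀ t, HasDerivAt (fun s => (γ s).2.1)
      (fbar ((γ t).1.1, (γ t).2.1)) t := by
    intro t
    have := hasFDerivAt_fst.comp_hasDerivAt t (hasFDerivAt_snd.comp_hasDerivAt t (hγ t))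
    simpa [Gamma1, GammaBarH, XomegaAb, Prod.add_def, Function.comp_def] using this
  have hw : ∀ t, HasDerivAt (fun s => (γ s).2.2)
      (σ (γ t).1 (fbar ((γ t).1.1, (γ t).2.1))
        + (fderiv ℝ σ ((γ t).1) ((γ t).2)) ((γ t).2.1)) t := by
    intro t
    have := hasFDerivAt_snd.comp_hasDerivAt t (hasFDerivAt_snd.comp_hasDerivAt t (hγ t))
    simpa [Gamma1, GammaBarH, XomegaAb, Prod.add_def, Function.comp_def] using this
  -- derivative of t ↦ σ (c t)
  have hσc : ∀ t, HasDerivAt (fun s => σ ((γ s).1))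
      ((fderiv ℝ σ ((γ t).1)) ((γ t).2)) t := by
    intro t
    exact ((hσ.differentiable (by simp) ((γ t).1)).hasFDerivAt).comp_hasDerivAt t (hc t)
  have hσcu : ∀ t, HasDerivAt (fun s => σ ((γ s).1) ((γ s).2.1))
      ((fderiv ℝ σ ((γ t).1) ((γ t).2)) ((γ t).2.1)
        + σ ((γ t).1) (fbar ((γ t).1.1, (γ t).2.1))) t := by
    intro t
    exact (hσc t).clm_apply (hu t)
  -- the gap g(t) = w(t) - σ(c t)(u t) has zero derivative and vanishes at 0
  set g : ℝ → F := fun t => (γ t).2.2 - σ ((γ t).1) ((γ t).2.1) with hgdef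
  have hg : ∀ t, HasDerivAt g 0 t := by
    intro t
    have := (hw t).sub (hσcu t)
    simpa [hgdef, add_comm, add_sub_cancel_right, sub_self, Pi.sub_def] using this
  have hgconst : ∀ t, g t = g 0 := by
    intro t
    have hdiff : Differentiable ℝ g := fun t => (hg t).differentiableAt
    have hderiv : ∀ t, deriv g t = 0 := fun t => (hg t).deriv
    exact is_const_of_deriv_eq_zero hdiff hderiv t 0
  have hg0 : g 0 = 0 := by simp [hgdef, hγ0]
  have hhor : ∀ t, (γ t).2.2 = σ ((γ t).1) ((γ t).2.1) := by
    intro t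
    have := (hgconst t).trans hg0
    simpa [hgdef, sub_eq_zero] using this
  refine ⟨by simp [hγ0], hhor, by simp [hγ0], ?_⟩
  intro t
  exact (hx t).prodMk (hu t)
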